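/- Let B ~ Bin(n, 1/2) and let L, x be integers with n/2 < L ≤ x ≤ n. Then Pr[B = x] ≥ ((2L − n)/n) · Pr[B ≥ x]. -/
import Mathlib


/-- The probability mass function of the binomial distribution `Bin(n, p)`:
`Pr[B = k] = C(n,k) p^k (1-p)^(n-k)`. -/
noncomputable def binomPMF (n : ℕ) (p : ℝ) (k : ℕ) : ℝ :=
  (n.choose k : ℝ) * p ^ k * (1 - p) ^ (n - k)

/-- `Pr[B ≥ x]` for `B ~ Bin(n, p)`. -/
noncomputable def prGE (n : ℕ) (p : ℝ) (x : ℕ) : ℝ :=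
  ∑ k ∈ Finset.Icc x n, binomPMF n p k

lemma binomPMF_half (n k : ℕ) (hk : k ≤ n) :
    binomPMF n (1/2 : ℝ) k = (n.choose k : ℝ) * (1/2 : ℝ)^n := by
  unfold binomPMF
  have h1 : (1:ℝ) - 1/2 = 1/2 := by norm_num
  rw [h1, mul_assoc, ← pow_add]
  congr 2
  omega

lemma binomPMF_nonneg (n k : ℕ) : 0 ≤ binomPMF n (1/2 : ℝ) k := by
  unfold binomPMF
  positivity

/-- For `B ~ Bin(n, 1/2)` and integers `L, x` with `n/2 < L ≤ x ≤ n`,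
`Pr[B = x] ≥ ((2L − n)/n) · Pr[B ≥ x]`. -/
theorem stmt_13 (n L x : ℕ) (hL : (n : ℝ) / 2 < (L : ℝ)) (hLx : L ≤ x) (hx : x ≤ n) :
    binomPMF n (1 / 2) x ≥ ((2 * (L : ℝ) - n) / n) * prGE n (1 / 2) x := by
  have hLpos : (0:ℝ) < (L:ℝ) := lt_of_le_of_lt (by positivity) hL
  have hLn : (L:ℝ) ≤ (n:ℝ) := by exact_mod_cast le_trans hLx hx
  have hnpos : (0:ℝ) < (n:ℝ) := lt_of_lt_of_le hLpos hLn
  have h2L : (n:ℝ) < 2 * L := by linarith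
  set r : ℝ := ((n:ℝ) - L) / L with hr
  have hr0 : 0 ≤ r := div_nonneg (by linarith) (le_of_lt hLpos)
  have hr1 : r < 1 := by
    rw [hr, div_lt_one hLpos]; linarith
  -- step: each next pmf term is at most r times the previous one
  have hstep : ∀ k, x ≤ k → binomPMF n (1/2 : ℝ) (k+1) ≤ r * binomPMF n (1/2 : ℝ) k := by
    intro k hk
    by_cases hkn : k + 1 ≤ n
    · rw [binomPMF_half n (k+1) hkn, binomPMF_half n k (by omega)]
      have hchoose : (n.choose (k+1) : ℝ) * (k+1) = (n.choose k : ℝ) * ((n:ℝ) - k) := by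
        have h' := Nat.choose_succ_right_eq n k
        have h'' : ((n.choose (k+1) * (k+1) : ℕ) : ℝ) = ((n.choose k * (n-k) : ℕ) : ℝ) := by
          exact_mod_cast h'
        push_cast [Nat.cast_sub (show k ≤ n by omega)] at h''
        linarith
      have hkL : (L:ℝ) ≤ (k:ℝ) := by exact_mod_cast le_trans hLx hk
      have hkn' : (k:ℝ) + 1 ≤ (n:ℝ) := by exact_mod_cast hkn
      have hkpos : (0:ℝ) < (k:ℝ) + 1 := by positivity
      have hcle : (n.choose (k+1) : ℝ) ≤ r * (n.choose k : ℝ) := by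
        have hck : (0:ℝ) ≤ (n.choose k : ℝ) := by positivity
        rw [hr]
        rw [div_mul_eq_mul_div, le_div_iff₀ hLpos]
        have : (n.choose (k+1) : ℝ) = (n.choose k : ℝ) * ((n:ℝ) - k) / ((k:ℝ)+1) := by
          field_simp
          linarith [hchoose]
        rw [this, div_mul_eq_mul_div, div_le_iff₀ hkpos]
        have key : ((n:ℝ) - k) * L ≤ ((n:ℝ) - L) * ((k:ℝ)+1) := by nlinarith
        nlinarith [mul_le_mul_of_nonneg_left key hck]
      have hp : (0:ℝ) < (1/2 : ℝ)^n := by positivity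
      calc (n.choose (k+1) : ℝ) * (1/2:ℝ)^n ≤ (r * (n.choose k : ℝ)) * (1/2:ℝ)^n := by
            exact mul_le_mul_of_nonneg_right hcle (le_of_lt hp)
        _ = r * ((n.choose k : ℝ) * (1/2:ℝ)^n) := by ring
    · have hc0 : n.choose (k+1) = 0 := Nat.choose_eq_zero_of_lt (by omega)
      have hz : binomPMF n (1/2:ℝ) (k+1) = 0 := by
        unfold binomPMF; rw [hc0]; simp
      rw [hz]
      exact mul_nonneg hr0 (binomPMF_nonneg n k)
  have hpow : ∀ j, binomPMF n (1/2:ℝ) (x + j) ≤ binomPMF n (1/2:ℝ) x * r ^ j := by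
    intro j
    induction j with
    | zero => simp
    | succ m ih =>
        have h1 : binomPMF n (1/2:ℝ) (x + m + 1) ≤ r * binomPMF n (1/2:ℝ) (x + m) :=
          hstep (x + m) (by omega)
        have h2 : r * binomPMF n (1/2:ℝ) (x + m) ≤ r * (binomPMF n (1/2:ℝ) x * r ^ m) :=
          mul_le_mul_of_nonneg_left ih hr0
        calc binomPMF n (1/2:ℝ) (x + (m+1)) = binomPMF n (1/2:ℝ) (x + m + 1) := by ring_nf
          _ ≤ r * (binomPMF n (1/2:ℝ) x * r ^ m) := le_trans h1 h2
          _ = binomPMF n (1/2:ℝ) x * r ^ (m+1) := by ring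
  have hsum : prGE n (1/2:ℝ) x ≤ binomPMF n (1/2:ℝ) x * ∑ j ∈ Finset.range (n + 1 - x), r ^ j := by
    unfold prGE
    rw [show Finset.Icc x n = Finset.Ico x (n+1) by rw [Finset.Ico_add_one_right_eq_Icc],
      Finset.sum_Ico_eq_sum_range]
    rw [Finset.mul_sum]
    apply Finset.sum_le_sum
    intro j _
    exact hpow j
  have hgeom : ∑ j ∈ Finset.range (n + 1 - x), r ^ j ≤ 1 / (1 - r) := by
    rw [le_div_iff₀ (by linarith)]
    have h := geom_sum_mul r (n + 1 - x)
    nlinarith [pow_nonneg hr0 (n + 1 - x)]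
  have hax : 0 ≤ binomPMF n (1/2:ℝ) x := binomPMF_nonneg n x
  have hsum2 : prGE n (1/2:ℝ) x ≤ binomPMF n (1/2:ℝ) x * (1 / (1 - r)) :=
    le_trans hsum (mul_le_mul_of_nonneg_left hgeom hax)
  have h1r : 1 - r = (2 * (L:ℝ) - n) / L := by
    rw [hr]; field_simp; ring
  have hfinal : ((2 * (L:ℝ) - n) / n) * prGE n (1/2:ℝ) x ≤ binomPMF n (1/2:ℝ) x := by
    have hcoef : (0:ℝ) ≤ (2 * (L:ℝ) - n) / n := div_nonneg (by linarith) (le_of_lt hnpos)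
    have h2 : ((2 * (L:ℝ) - n) / n) * prGE n (1/2:ℝ) x
        ≤ ((2 * (L:ℝ) - n) / n) * (binomPMF n (1/2:ℝ) x * (1 / (1 - r))) :=
      mul_le_mul_of_nonneg_left hsum2 hcoef
    have h3 : ((2 * (L:ℝ) - n) / n) * (binomPMF n (1/2:ℝ) x * (1 / (1 - r)))
        = binomPMF n (1/2:ℝ) x * ((L:ℝ) / n) := by
      rw [h1r]
      have h2Ln : (0:ℝ) < 2 * (L:ℝ) - n := by linarith
      field_simp
    have h4 : binomPMF n (1/2:ℝ) x * ((L:ℝ) / n) ≤ binomPMF n (1/2:ℝ) x := by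
      have : (L:ℝ) / n ≤ 1 := by rw [div_le_one hnpos]; exact hLn
      nlinarith
    linarith
  exact hfinal
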